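/- For any formula A of the bimodal language L₂, the following are equivalent: (1) GR° ⊢ A; (2) A is valid on all GR°-frames; (3) A is valid on all finite GR°-frames (i.e., GR°-frames with finite underlying set W). -/

import Mathlib

/-- Formulas of the bimodal language `L₂`: countably many propositional
variables, `⊥`, `¬`, `∨`, and two modal operators `□` (`box`) and `■` (`bb`). -/
inductive Formula : Type
  | var : ℕ → Formula
  | falsum : Formula
  | neg : Formula → Formula
  | or : Formula → Formula → Formula
  | box : Formula → Formula
  | bb : Formula → Formula

namespace Formula

/-- `A → B` is defined as `¬A ∨ B`. -/
def imp (A B : Formula) : Formula := (A.neg).or B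

/-- `A ∧ B` is defined as `¬(¬A ∨ ¬B)`. -/
def and (A B : Formula) : Formula := ((A.neg).or B.neg).neg

/-- `◇A` abbreviates `¬□¬A`. -/
def dia (A : Formula) : Formula := ((A.neg).box).neg

end Formula

/-- Propositional evaluation: variables and formulas of the form `□A`, `■A`
are treated as atoms whose truth value is given by `v`. -/
def evalProp (v : Formula → Bool) : Formula → Bool
  | .var n => v (.var n)
  | .falsum => false
  | .neg A => !(evalProp v A)
  | .or A B => evalProp v A || evalProp v B
  | .box A => v (.box A)
  | .bb A => v (.bb A)

/-- Propositional tautologies of the bimodal language `L₂`. -/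
def Taut (A : Formula) : Prop := ∀ v : Formula → Bool, evalProp v A = true

/-- The logic GRcirc. -/
inductive GRcirc : Formula → Prop
  | taut {A : Formula} : Taut A → GRcirc A
  | k {A B : Formula} : GRcirc (((A.imp B).box).imp ((A.box).imp (B.box)))
  | loeb {A : Formula} : GRcirc ((((A.box).imp A).box).imp (A.box))
  | bbBox {A : Formula} : GRcirc ((A.bb).imp (A.box))
  | boxBb {A : Formula} : GRcirc ((A.box).imp ((A.bb).box))
  | ros {A : Formula} : GRcirc ((A.box).imp ((Formula.falsum.box).or (A.bb)))
  | diaBb {A : Formula} : GRcirc (((A.bb).dia).imp (A.dia))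
  | mp {A B : Formula} : GRcirc (A.imp B) → GRcirc A → GRcirc B
  | nec {A : Formula} : GRcirc A → GRcirc (A.box)
  | bbnec {A : Formula} : GRcirc A → GRcirc (A.bb)

/-- A `GR°`-frame: a nonempty set of worlds `W`, a transitive conversely
well-founded relation `⊏` (`lt`), and for each formula `B` a relation
`≺_B` (`prec B`) satisfying the four frame conditions. -/
structure GRFrame where
  W : Type
  nonempty : Nonempty W
  lt : W → W → Prop
  lt_trans : ∀ {x y z : W}, lt x y → lt y z → lt x z
  /-- `⊏` is conversely well-founded. -/
  cwf : WellFounded (fun x y : W => lt y x)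
  prec : Formula → W → W → Prop
  lt_to_prec : ∀ {B : Formula} {x y : W}, lt x y → prec B x y
  lt_prec_lt : ∀ {B : Formula} {x y z : W}, lt x y → prec B y z → lt x z
  prec_lt_lt : ∀ {B : Formula} {x y z : W}, prec B x y → lt x z → lt x y
  lt_succ : ∀ {B : Formula} {x y : W}, lt x y → ∃ z : W, prec B y z ∧ lt x z

/-- A satisfaction relation on a `GR°`-frame. -/
structure GRSat (F : GRFrame) where
  frc : F.W → Formula → Prop
  frc_falsum : ∀ w : F.W, ¬ frc w Formula.falsum
  frc_neg : ∀ (w : F.W) (A : Formula), frc w A.neg ↔ ¬ frc w A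
  frc_or : ∀ (w : F.W) (A B : Formula), frc w (A.or B) ↔ (frc w A ∨ frc w B)
  frc_box : ∀ (w : F.W) (B : Formula), frc w B.box ↔ ∀ x : F.W, F.lt w x → frc x B
  frc_bb : ∀ (w : F.W) (B : Formula), frc w B.bb ↔ ∀ x : F.W, F.prec B w x → frc x B

/-- `A` is valid on the frame `F`: it holds at every world under every
satisfaction relation on `F`. -/
def ValidOn (F : GRFrame) (A : Formula) : Prop :=
  ∀ (S : GRSat F) (w : F.W), S.frc w A

/-- A frame is non-trivial iff it has a root `r` (w.r.t. `⊏`) and some world `w ≠ r`. -/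
def GRFrame.NonTrivial (F : GRFrame) : Prop :=
  ∃ r w : F.W, (∀ x : F.W, x ≠ r → F.lt r x) ∧ r ≠ w

/-- A frame is `■`-serial iff every `≺_B` is serial. -/
def GRFrame.Serial (F : GRFrame) : Prop :=
  ∀ (B : Formula) (x : F.W), ∃ y : F.W, F.prec B x y

/-!
Soundness is an induction on derivations. For completeness, suppose `⊬ A` and take the set `Φ`
of subformulas of `A`, closed under `■C ↦ □C, □¬C`, and its maximal consistent subsets (atoms),
related as in the finite canonical model of GL; the successor lemma is Löb's axiom. The
countermodel unravels this into the finite tree of chains of atoms. At a world where `□⊥` fails,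
`■` coincides with `□` by `■C → □C` and `□C → □⊥ ∨ ■C`. At a dead end, `≺_B` points to the
siblings that decide `B` as the dead end decides `■B`. Such siblings exist by `□C → □■C` and
`◇■C → ◇C` below a parent, and by `■`-necessitation at the root. Finiteness makes `⊏`
conversely well-founded.
-/

namespace GRcirc

def conj : List Formula → Formula
  | [] => Formula.falsum.neg
  | A :: Γ => A.and (conj Γ)

section Propositional

/-- Stated as a `Prop`, so that `simp` and `tauto` decide tautologies. -/
def Holds (v : Formula → Bool) (A : Formula) : Prop := evalProp v A = true

variable (v : Formula → Bool)

@[simp] lemma holds_falsum : ¬ Holds v .falsum := Bool.false_ne_true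

@[simp] lemma holds_neg (A : Formula) : Holds v A.neg ↔ ¬ Holds v A := by
  simp [Holds, evalProp]

@[simp] lemma holds_or (A B : Formula) : Holds v (A.or B) ↔ Holds v A ∨ Holds v B := by
  simp [Holds, evalProp]

@[simp] lemma holds_imp (A B : Formula) : Holds v (A.imp B) ↔ (Holds v A → Holds v B) := by
  simp [Formula.imp, imp_iff_not_or]

@[simp] lemma holds_and (A B : Formula) : Holds v (A.and B) ↔ Holds v A ∧ Holds v B := by
  simp [Formula.and]

@[simp] lemma holds_dia (A : Formula) : Holds v A.dia ↔ ¬ Holds v A.neg.box := by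
  simp [Formula.dia]

@[simp] lemma holds_conj (Γ : List Formula) : Holds v (conj Γ) ↔ ∀ D ∈ Γ, Holds v D := by
  induction Γ with
  | nil => simp [conj]
  | cons A Γ ih => simp [conj, ih]

end Propositional

lemma of_holds {A : Formula} (h : ∀ v, Holds v A) : GRcirc A := taut h

end GRcirc

namespace GRSat

variable {F : GRFrame} (S : GRSat F)

lemma frc_imp (w : F.W) (A B : Formula) : S.frc w (A.imp B) ↔ (S.frc w A → S.frc w B) := by
  simp only [Formula.imp, S.frc_or, S.frc_neg]
  tauto

open Classical in
lemma holds_iff_frc (w : F.W) (A : Formula) :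
    GRcirc.Holds (fun C => decide (S.frc w C)) A ↔ S.frc w A := by
  induction A with
  | neg A ih => simp [S.frc_neg, ih]
  | or A B ihA ihB => simp [S.frc_or, ihA, ihB]
  | falsum => simp [S.frc_falsum]
  | _ => simp [GRcirc.Holds, evalProp]

end GRSat

theorem GRcirc.sound {A : Formula} (h : GRcirc A) (F : GRFrame) : ValidOn F A := by
  intro S w
  induction h generalizing w with
  | taut hA => exact (S.holds_iff_frc w _).mp (hA _)
  | k =>
    simp only [S.frc_imp, S.frc_box]
    exact fun hAB hA x hx => hAB x hx (hA x hx)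
  | loeb =>
    simp only [S.frc_imp, S.frc_box]
    intro h x hwx
    induction x using F.cwf.induction with
    | _ x ih => exact h x hwx fun y hxy => ih y hxy (F.lt_trans hwx hxy)
  | bbBox =>
    simp only [S.frc_imp, S.frc_bb, S.frc_box]
    exact fun h x hx => h x (F.lt_to_prec hx)
  | boxBb =>
    simp only [S.frc_imp, S.frc_box, S.frc_bb]
    exact fun h x hx y hy => h y (F.lt_prec_lt hx hy)
  | ros =>
    simp only [S.frc_imp, S.frc_or, S.frc_box, S.frc_bb]
    intro h
    by_cases htop : ∀ x, F.lt w x → S.frc x .falsum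
    · exact Or.inl htop
    · obtain ⟨z, hz, -⟩ := not_forall₂.mp htop
      exact Or.inr fun x hx => h x (F.prec_lt_lt hx hz)
  | @diaBb A =>
    simp only [Formula.dia, S.frc_imp, S.frc_neg, S.frc_box, S.frc_bb]
    intro hdia hnA
    refine hdia fun x hwx hbb => ?_
    obtain ⟨z, hxz, hwz⟩ := F.lt_succ (B := A) hwx
    exact hnA z hwz (hbb z hxz)
  | mp _ _ ihAB ihA => exact (S.frc_imp w _ _).mp (ihAB w) (ihA w)
  | nec _ ih => exact (S.frc_box w _).mpr fun x _ => ih x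
  | bbnec _ ih => exact (S.frc_bb w _).mpr fun x _ => ih x

namespace GRcirc

lemma of_conj {Δ : List Formula} {A : Formula} (hΔ : ∀ D ∈ Δ, GRcirc D)
    (h : GRcirc ((conj Δ).imp A)) : GRcirc A := by
  induction Δ generalizing A with
  | nil => exact mp (of_holds fun v => by simp) h
  | cons D Δ ih =>
    refine mp (ih (fun E hE => hΔ E (List.mem_cons_of_mem D hE)) ?_) (hΔ D List.mem_cons_self)
    exact mp (of_holds fun v => by simp; tauto) h

lemma of_taut {Δ : List Formula} {A : Formula} (hΔ : ∀ D ∈ Δ, GRcirc D)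
    (h : ∀ v, Holds v ((conj Δ).imp A)) : GRcirc A :=
  of_conj hΔ (of_holds h)

lemma box_mono {A B : Formula} (h : GRcirc (A.imp B)) : GRcirc (A.box.imp B.box) :=
  mp k (nec h)

lemma imp_trans {A B C : Formula} (h₁ : GRcirc (A.imp B)) (h₂ : GRcirc (B.imp C)) :
    GRcirc (A.imp C) :=
  of_taut (Δ := [A.imp B, B.imp C]) (by simp [h₁, h₂]) (fun v => by simp; tauto)

/-- Axiom 4 is derivable from Löb's axiom, via `□(C ∧ □C)`. -/
lemma box_box (C : Formula) : GRcirc (C.box.imp C.box.box) := by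
  set D := C.and C.box
  have hDC : GRcirc (D.box.imp C.box) := box_mono (of_holds fun v => by simp [D]; tauto)
  have hD : GRcirc (C.imp (D.box.imp D)) :=
    of_taut (Δ := [D.box.imp C.box]) (by simp [hDC]) (fun v => by simp [D]; tauto)
  exact imp_trans (imp_trans (box_mono hD) loeb)
    (box_mono (of_holds fun v => by simp [D]))

lemma box_neg_imp_box_neg_bb (C : Formula) : GRcirc (C.neg.box.imp C.bb.neg.box) :=
  of_taut (Δ := [C.bb.dia.imp C.dia]) (by simp [diaBb]) (fun v => by simp; tauto)

def Derivable (Γ : List Formula) (A : Formula) : Prop := GRcirc ((conj Γ).imp A)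

def Consistent (Γ : List Formula) : Prop := ¬ Derivable Γ .falsum

namespace Derivable

variable {Γ Δ : List Formula} {A B : Formula}

lemma of_grcirc (h : GRcirc A) : Derivable Γ A :=
  mp (of_holds fun v => by simp; tauto) h

lemma mem (h : A ∈ Γ) : Derivable Γ A :=
  of_holds fun v => by simp; tauto

lemma cut (hΔ : ∀ D ∈ Δ, Derivable Γ D) (h : GRcirc ((conj Δ).imp A)) : Derivable Γ A := by
  refine of_conj (Δ := ((conj Δ).imp A) :: Δ.map (fun D => (conj Γ).imp D)) ?_ ?_
  · simpa [h, Derivable] using hΔ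
  · exact of_holds fun v => by
      simpa using fun hA hΔ hΓ => hA fun D hD => hΔ D hD hΓ

lemma of_taut (hΔ : ∀ D ∈ Δ, Derivable Γ D) (h : ∀ v, Holds v ((conj Δ).imp A)) : Derivable Γ A :=
  cut hΔ (of_holds h)

lemma mono (hΓΔ : ∀ D ∈ Γ, D ∈ Δ) (h : Derivable Γ A) : Derivable Δ A :=
  cut (fun D hD => mem (hΓΔ D hD)) h

lemma mp (hAB : Derivable Γ (A.imp B)) (hA : Derivable Γ A) : Derivable Γ B :=
  of_taut (Δ := [A.imp B, A]) (by simp [hAB, hA]) (fun v => by simp)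

lemma box_of_conj {S : List Formula} (hS : ∀ D ∈ S, Derivable Γ D.box)
    (h : GRcirc ((conj S).imp A)) : Derivable Γ A.box := by
  induction S generalizing A with
  | nil => exact of_grcirc (nec (GRcirc.mp (of_holds fun v => by simp) h))
  | cons D S ih =>
    have hDA : Derivable Γ (D.imp A).box :=
      ih (fun E hE => hS E (List.mem_cons_of_mem D hE))
        (GRcirc.mp (of_holds fun v => by simp; tauto) h)
    exact mp (mp (of_grcirc k) hDA) (hS D List.mem_cons_self)

end Derivable

lemma Consistent.not_derivable_neg {Γ : List Formula} (hΓ : Consistent Γ) {C : Formula}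
    (h : Derivable Γ C) : ¬ Derivable Γ C.neg := fun hn =>
  hΓ (.of_taut (Δ := [C, C.neg]) (by simp [h, hn]) (fun v => by simp))

lemma consistent_cons_or {Γ : List Formula} (hΓ : Consistent Γ) (C : Formula) :
    Consistent (C :: Γ) ∨ Consistent (C.neg :: Γ) := by
  by_contra! h
  refine hΓ (GRcirc.mp (GRcirc.mp (of_holds ?_) (not_not.mp h.1)) (not_not.mp h.2))
  exact fun v => by simp [conj]; tauto

lemma consistent_singleton_neg {A : Formula} (hA : ¬ GRcirc A) : Consistent [A.neg] :=
  fun h => hA (GRcirc.mp (of_holds fun v => by simp [conj]) h)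

structure Adequate (Φ : List Formula) : Prop where
  box_falsum_mem : Formula.falsum.box ∈ Φ
  of_neg_mem {C : Formula} : C.neg ∈ Φ → C ∈ Φ
  of_or_mem {C D : Formula} : C.or D ∈ Φ → C ∈ Φ ∧ D ∈ Φ
  of_box_mem {C : Formula} : C.box ∈ Φ → C ∈ Φ
  box_mem_of_bb_mem {C : Formula} : C.bb ∈ Φ → C.box ∈ Φ
  box_neg_mem_of_bb_mem {C : Formula} : C.bb ∈ Φ → C.neg.box ∈ Φ

variable {Φ : List Formula}

open Classical in
noncomputable def lits (Φ : List Formula) (s : Set Formula) : List Formula :=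
  Φ.map fun C => if C ∈ s then C else C.neg

lemma mem_lits {s : Set Formula} {C : Formula} (hΦ : C ∈ Φ) (hs : C ∈ s) : C ∈ lits Φ s :=
  List.mem_map.mpr ⟨C, hΦ, if_pos hs⟩

lemma neg_mem_lits {s : Set Formula} {C : Formula} (hΦ : C ∈ Φ) (hs : C ∉ s) :
    C.neg ∈ lits Φ s :=
  List.mem_map.mpr ⟨C, hΦ, if_neg hs⟩

/-- A `Φ`-maximal consistent set. -/
structure Atom (Φ : List Formula) where
  carrier : Set Formula
  subset : carrier ⊆ {C | C ∈ Φ}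
  consistent : Consistent (lits Φ carrier)

namespace Atom

instance : SetLike (Atom Φ) Formula where
  coe := carrier
  coe_injective a b h := by cases a; cases b; congr

variable (a : Atom Φ) {C D : Formula}

lemma consistent_lits : Consistent (lits Φ a) := a.consistent

lemma mem_Φ (h : C ∈ a) : C ∈ Φ := a.subset h

lemma derivable_iff_mem (hC : C ∈ Φ) : Derivable (lits Φ a) C ↔ C ∈ a :=
  ⟨fun h => by_contra fun hn => a.consistent_lits.not_derivable_neg h (.mem (neg_mem_lits hC hn)),
    fun h => .mem (mem_lits hC h)⟩

lemma mem_of_grcirc (hC : C ∈ Φ) (h : GRcirc C) : C ∈ a :=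
  (a.derivable_iff_mem hC).mp (.of_grcirc h)

lemma falsum_not_mem : Formula.falsum ∉ a :=
  fun h => a.consistent_lits (.mem (mem_lits (a.mem_Φ h) h))

lemma neg_mem_iff (hC : C ∈ Φ) (hn : C.neg ∈ Φ) : C.neg ∈ a ↔ C ∉ a := by
  rw [← a.derivable_iff_mem hn, ← a.derivable_iff_mem hC]
  exact ⟨fun h hC => a.consistent_lits.not_derivable_neg hC h,
    fun h => .mem (neg_mem_lits hC ((a.derivable_iff_mem hC).not.mp h))⟩

lemma or_mem_iff (hC : C ∈ Φ) (hD : D ∈ Φ) (h : C.or D ∈ Φ) : C.or D ∈ a ↔ C ∈ a ∨ D ∈ a := by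
  rw [← a.derivable_iff_mem h]
  constructor
  · intro hCD
    by_contra! hn
    refine a.consistent_lits.not_derivable_neg hCD (.of_taut (Δ := [C.neg, D.neg]) ?_
      (fun v => by simp))
    simp [Derivable.mem (neg_mem_lits hC hn.1), Derivable.mem (neg_mem_lits hD hn.2)]
  · rintro (hC' | hD')
    · exact .of_taut (Δ := [C]) (by simp [Derivable.mem (mem_lits hC hC')])
        (fun v => by simp; tauto)
    · exact .of_taut (Δ := [D]) (by simp [Derivable.mem (mem_lits hD hD')])
        (fun v => by simp; tauto)

end Atom

lemma exists_consistent_extension (L : List Formula) {T : List Formula} (hT : Consistent T) :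
    ∃ T', Consistent T' ∧ (∀ D ∈ T, D ∈ T') ∧ ∀ C ∈ L, C ∈ T' ∨ C.neg ∈ T' := by
  induction L generalizing T with
  | nil => exact ⟨T, hT, fun _ h => h, by simp⟩
  | cons C L ih =>
    obtain ⟨E, hE, hEC⟩ : ∃ E, Consistent (E :: T) ∧ (E = C ∨ E = C.neg) := by
      rcases consistent_cons_or hT C with h | h
      exacts [⟨C, h, .inl rfl⟩, ⟨C.neg, h, .inr rfl⟩]
    obtain ⟨T', hT', hsub, hdec⟩ := ih hE
    refine ⟨T', hT', fun D hD => hsub D (List.mem_cons_of_mem E hD), ?_⟩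
    simp only [List.forall_mem_cons]
    refine ⟨?_, hdec⟩
    rcases hEC with rfl | rfl
    exacts [.inl (hsub _ List.mem_cons_self), .inr (hsub _ List.mem_cons_self)]

/-- Lindenbaum's lemma, relativised to `Φ`. -/
lemma Atom.exists_of_consistent {T : List Formula} (hT : Consistent T) :
    ∃ a : Atom Φ, ∀ C ∈ Φ, (C ∈ T → C ∈ a) ∧ (C.neg ∈ T → C ∉ a) := by
  obtain ⟨T', hT', hsub, hdec⟩ := exists_consistent_extension Φ hT
  have hlits : ∀ D ∈ lits Φ {C | C ∈ Φ ∧ C ∈ T'}, D ∈ T' := by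
    simp only [lits, List.mem_map]
    rintro _ ⟨C, hC, rfl⟩
    split_ifs with h
    exacts [h.2, (hdec C hC).resolve_left fun h' => h ⟨hC, h'⟩]
  refine ⟨⟨{C | C ∈ Φ ∧ C ∈ T'}, fun C h => h.1, fun h => hT' (h.mono hlits)⟩, fun C hC => ?_⟩
  refine ⟨fun h => ⟨hC, hsub C h⟩, fun h ⟨_, hCT'⟩ => ?_⟩
  exact hT'.not_derivable_neg (.mem hCT') (.mem (hsub _ h))

/-- The last clause makes the relation irreflexive, as in the finite canonical model of GL. -/
structure Step (a b : Atom Φ) : Prop where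
  mem_of_box_mem {C : Formula} : C.box ∈ a → C ∈ b
  box_mem_of_box_mem {C : Formula} : C.box ∈ a → C.box ∈ b
  bb_mem_of_box_mem {C : Formula} : C.box ∈ a → C.bb ∈ Φ → C.bb ∈ b
  bb_not_mem_of_box_neg_mem {C : Formula} : C.neg.box ∈ a → C.bb ∉ b
  exists_box_mem_not_mem : ∃ D : Formula, D.box ∈ b ∧ D.box ∉ a

namespace Step

variable {a b c : Atom Φ}

lemma trans (hab : Step a b) (hbc : Step b c) : Step a c where
  mem_of_box_mem h := hbc.mem_of_box_mem (hab.box_mem_of_box_mem h)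
  box_mem_of_box_mem h := hbc.box_mem_of_box_mem (hab.box_mem_of_box_mem h)
  bb_mem_of_box_mem h := hbc.bb_mem_of_box_mem (hab.box_mem_of_box_mem h)
  bb_not_mem_of_box_neg_mem h := hbc.bb_not_mem_of_box_neg_mem (hab.box_mem_of_box_mem h)
  exists_box_mem_not_mem := by
    obtain ⟨D, hc, hb⟩ := hbc.exists_box_mem_not_mem
    exact ⟨D, hc, fun ha => hb (hab.box_mem_of_box_mem ha)⟩

lemma irrefl (a : Atom Φ) : ¬ Step a a := fun h => by
  obtain ⟨D, h₁, h₂⟩ := h.exists_box_mem_not_mem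
  exact h₂ h₁

lemma box_falsum_not_mem (h : Step a b) : Formula.falsum.box ∉ a :=
  fun h' => b.falsum_not_mem (h.mem_of_box_mem h')

end Step

def negBb : Formula → List Formula
  | .neg C => [C.bb.neg]
  | _ => []

def unbox : Formula → List Formula
  | .box C => C :: C.box :: C.bb :: negBb C
  | _ => []

lemma imp_box_of_mem_unbox {D ℓ : Formula} (h : ℓ ∈ unbox D) : GRcirc (D.imp ℓ.box) := by
  cases D with
  | box C =>
    simp only [unbox, List.mem_cons] at h
    rcases h with rfl | rfl | rfl | h
    · exact of_holds fun v => by simp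
    · exact box_box _
    · exact boxBb
    · cases C <;> simp only [negBb, List.mem_cons, List.not_mem_nil, or_false] at h
      subst h
      exact box_neg_imp_box_neg_bb _
  | _ => simp [unbox] at h

noncomputable def seed (a : Atom Φ) : List Formula := (lits Φ a).flatMap unbox

lemma derivable_box_of_mem_seed {a : Atom Φ} {ℓ : Formula} (h : ℓ ∈ seed a) :
    Derivable (lits Φ a) ℓ.box := by
  obtain ⟨D, hD, hℓ⟩ := List.mem_flatMap.mp h
  exact .mp (.of_grcirc (imp_box_of_mem_unbox hℓ)) (.mem hD)

lemma mem_seed_of_box_mem {a : Atom Φ} {C ℓ : Formula} (h : C.box ∈ a) (hℓ : ℓ ∈ unbox C.box) :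
    ℓ ∈ seed a :=
  List.mem_flatMap.mpr ⟨C.box, mem_lits (a.mem_Φ h) h, hℓ⟩

/-- If `¬G, □G, seed a` were inconsistent, `a` would derive `□(□G → G)`, hence `□G` by Löb. -/
theorem Atom.exists_step_not_mem (hΦ : Adequate Φ) (a : Atom Φ) {G : Formula}
    (hG : G.box ∈ Φ) (ha : G.box ∉ a) : ∃ b : Atom Φ, Step a b ∧ G ∉ b := by
  have hT : Consistent (G.neg :: G.box :: seed a) := by
    intro h
    have hloeb : GRcirc ((conj (seed a)).imp (G.box.imp G)) :=
      GRcirc.mp (of_holds fun v => by simp [conj]; tauto) h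
    exact ha ((a.derivable_iff_mem hG).mp
      (.mp (.of_grcirc loeb) (.box_of_conj (fun _ => derivable_box_of_mem_seed) hloeb)))
  obtain ⟨b, hb⟩ := Atom.exists_of_consistent (Φ := Φ) hT
  have hseed {C ℓ : Formula} (h : C.box ∈ a) (hℓ : ℓ ∈ unbox C.box) (hℓΦ : ℓ ∈ Φ) : ℓ ∈ b :=
    (hb ℓ hℓΦ).1 (by simp [mem_seed_of_box_mem h hℓ])
  refine ⟨b, ⟨fun h => ?_, fun h => ?_, fun h hbb => ?_, fun {C} h hbb => ?_, ?_⟩, ?_⟩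
  · exact hseed h (by simp [unbox]) (hΦ.of_box_mem (a.mem_Φ h))
  · exact hseed h (by simp [unbox]) (a.mem_Φ h)
  · exact hseed h (by simp [unbox]) hbb
  · have hℓ : C.bb.neg ∈ seed a := mem_seed_of_box_mem h (by simp [unbox, negBb])
    exact (hb _ (b.mem_Φ hbb)).2 (by simp [hℓ]) hbb
  · exact ⟨G, (hb _ hG).1 (by simp), ha⟩
  · exact (hb G (hΦ.of_box_mem hG)).2 (by simp)

instance Atom.finite (Φ : List Formula) : Finite (Atom Φ) :=
  have := (List.finite_toSet Φ).powerset.to_subtype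
  .of_injective (fun a : Atom Φ => (⟨a, a.subset⟩ : 𝒫 {C | C ∈ Φ}))
    fun _ _ h => SetLike.coe_injective (congrArg Subtype.val h)

/-- Where `□⊥` fails, the axioms `■A → □A` and `□A → □⊥ ∨ ■A` identify `■C` with `□C`. -/
lemma Atom.bb_mem_iff_box_mem (hΦ : Adequate Φ) (a : Atom Φ) {C : Formula} (hC : C.bb ∈ Φ)
    (ha : Formula.falsum.box ∉ a) : C.bb ∈ a ↔ C.box ∈ a := by
  have hbox := hΦ.box_mem_of_bb_mem hC
  rw [← a.derivable_iff_mem hC, ← a.derivable_iff_mem hbox]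
  refine ⟨.mp (.of_grcirc bbBox), fun h => ?_⟩
  refine .of_taut (Δ := [C.box.imp (Formula.falsum.box.or C.bb), Formula.falsum.box.neg, C.box])
    ?_ (fun v => by simp; tauto)
  simp [Derivable.of_grcirc ros, Derivable.mem (neg_mem_lits hΦ.box_falsum_mem ha), h]

lemma Step.exists_step_iff (hΦ : Adequate Φ) {u w : Atom Φ} (h : Step u w) {B : Formula}
    (hB : B.bb ∈ Φ) : ∃ m : Atom Φ, Step u m ∧ (B ∈ m ↔ B.bb ∈ w) := by
  have hneg := hΦ.of_box_mem (hΦ.box_neg_mem_of_bb_mem hB)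
  by_cases hw : B.bb ∈ w
  · obtain ⟨m, hum, hm⟩ := u.exists_step_not_mem hΦ (hΦ.box_neg_mem_of_bb_mem hB)
      fun hu => h.bb_not_mem_of_box_neg_mem hu hw
    have hBm : B ∈ m := by_contra fun hBm => hm ((m.neg_mem_iff (hΦ.of_neg_mem hneg) hneg).mpr hBm)
    exact ⟨m, hum, iff_of_true hBm hw⟩
  · obtain ⟨m, hum, hm⟩ := u.exists_step_not_mem hΦ (hΦ.box_mem_of_bb_mem hB)
      fun hu => hw (h.bb_mem_of_box_mem hu hB)
    exact ⟨m, hum, iff_of_false hm hw⟩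

/-- A world of the countermodel: a `Step`-chain `tail.last, …, tail.head, head` of atoms,
stored newest first. Unravelling the canonical model into such paths gives every world a
unique history, which the relations `≺_B` need. -/
structure Path (Φ : List Formula) where
  head : Atom Φ
  tail : List (Atom Φ)
  chain : (head :: tail).IsChain (flip Step)

namespace Path

def toList (σ : Path Φ) : List (Atom Φ) := σ.head :: σ.tail

lemma toList_injective : Function.Injective (toList (Φ := Φ)) := by
  rintro ⟨a, l, _⟩ ⟨b, m, _⟩ h
  cases h
  rfl

instance : Trans (flip (Step (Φ := Φ))) (flip Step) (flip Step) := ⟨fun h₁ h₂ => h₂.trans h₁⟩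

lemma pairwise (σ : Path Φ) : σ.toList.Pairwise (flip Step) := σ.chain.pairwise

instance (Φ : List Formula) : Finite (Path Φ) := by
  set N := Nat.card (Atom Φ)
  have hlen (σ : Path Φ) : σ.toList.length ≤ N := by
    refine List.Nodup.length_le_natCard (σ.pairwise.imp ?_)
    rintro a _ h rfl
    exact Step.irrefl a h
  have := (List.finite_length_le (Atom Φ) N).to_subtype
  exact .of_injective (fun σ => (⟨σ.toList, hlen σ⟩ : {l : List (Atom Φ) | l.length ≤ N}))
    fun σ τ h => toList_injective (congrArg Subtype.val h)

/-- `σ ⊏ τ`: the path `τ` properly extends `σ`. -/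
def lt (σ τ : Path Φ) : Prop := σ.toList <:+ τ.tail

/-- `σ ≺_B τ`: besides `σ ⊏ τ`, a dead end `σ` sees the siblings `τ` (paths with the same
history, including `σ` itself) whose head decides `B` as `σ` decides `■B`. -/
def prec (B : Formula) (σ τ : Path Φ) : Prop :=
  σ.lt τ ∨ (Formula.falsum.box ∈ σ.head ∧ τ.tail = σ.tail ∧
    (B.bb ∈ Φ → (B ∈ τ.head ↔ B.bb ∈ σ.head)))

lemma lt_trans {σ τ υ : Path Φ} (h₁ : σ.lt τ) (h₂ : τ.lt υ) : σ.lt υ :=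
  h₁.trans ((List.suffix_cons _ _).trans h₂)

lemma lt_irrefl (σ : Path Φ) : ¬ σ.lt σ := fun h => by
  simpa [toList] using h.length_le

lemma step_of_lt {σ τ : Path Φ} (h : σ.lt τ) : Step σ.head τ.head :=
  List.rel_of_pairwise_cons τ.pairwise (h.subset List.mem_cons_self)

lemma box_falsum_not_mem_of_lt {σ τ : Path Φ} (h : σ.lt τ) : Formula.falsum.box ∉ σ.head :=
  (step_of_lt h).box_falsum_not_mem

lemma tail_ne_nil_of_lt {σ τ : Path Φ} (h : σ.lt τ) : τ.tail ≠ [] := by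
  rintro h'
  simpa [h', toList] using h.length_le

def cons (σ : Path Φ) (m : Atom Φ) (h : Step σ.head m) : Path Φ :=
  ⟨m, σ.toList, List.isChain_cons_cons.mpr ⟨h, σ.chain⟩⟩

lemma lt_cons (σ : Path Φ) (m : Atom Φ) (h : Step σ.head m) : σ.lt (σ.cons m h) :=
  List.suffix_refl _

def sibling (σ : Path Φ) (m : Atom Φ) (h : ∀ u ∈ σ.tail.head?, Step u m) : Path Φ :=
  ⟨m, σ.tail, List.isChain_cons.mpr ⟨h, (List.isChain_cons.mp σ.chain).2⟩⟩

lemma exists_sibling (hΦ : Adequate Φ) (σ : Path Φ) (hσ : σ.tail ≠ []) (B : Formula) :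
    ∃ τ : Path Φ, τ.tail = σ.tail ∧ (B.bb ∈ Φ → (B ∈ τ.head ↔ B.bb ∈ σ.head)) := by
  obtain ⟨u, t, ht⟩ := List.exists_cons_of_ne_nil hσ
  have hu : Step u σ.head := (List.isChain_cons.mp σ.chain).1 u (by simp [ht])
  by_cases hB : B.bb ∈ Φ
  · obtain ⟨m, hum, hm⟩ := hu.exists_step_iff hΦ hB
    exact ⟨σ.sibling m (by simp [ht, hum]), rfl, fun _ => hm⟩
  · exact ⟨σ, rfl, fun h => absurd h hB⟩

lemma exists_sibling_not_mem (hΦ : Adequate Φ) (σ : Path Φ) {B : Formula} (hB : B.bb ∈ Φ)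
    (hσ : B.bb ∉ σ.head) : ∃ τ : Path Φ, τ.tail = σ.tail ∧ B ∉ τ.head := by
  rcases eq_or_ne σ.tail [] with hnil | hσ'
  · have hnB : ¬ GRcirc B := fun hB' => hσ (σ.head.mem_of_grcirc hB (bbnec hB'))
    obtain ⟨m, hm⟩ := Atom.exists_of_consistent (Φ := Φ) (consistent_singleton_neg hnB)
    exact ⟨σ.sibling m (by simp [hnil]), rfl,
      (hm B (hΦ.of_box_mem (hΦ.box_mem_of_bb_mem hB))).2 (by simp)⟩
  · obtain ⟨τ, hτ, hτB⟩ := σ.exists_sibling hΦ hσ' B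
    exact ⟨τ, hτ, (hτB hB).not.mpr hσ⟩

lemma lt_of_lt_of_prec {σ τ υ : Path Φ} {B : Formula} (h₁ : σ.lt τ) (h₂ : τ.prec B υ) :
    σ.lt υ := by
  rcases h₂ with h₂ | ⟨-, h, -⟩
  · exact lt_trans h₁ h₂
  · rwa [lt, h]

lemma lt_of_prec_of_lt {σ τ υ : Path Φ} {B : Formula} (h₁ : σ.prec B τ) (h₂ : σ.lt υ) :
    σ.lt τ :=
  h₁.resolve_right fun ⟨htop, _⟩ => box_falsum_not_mem_of_lt h₂ htop

lemma exists_prec_lt (hΦ : Adequate Φ) {σ τ : Path Φ} (h : σ.lt τ) (B : Formula) :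
    ∃ υ : Path Φ, τ.prec B υ ∧ σ.lt υ := by
  by_cases htop : Formula.falsum.box ∈ τ.head
  · obtain ⟨υ, hυ, hB⟩ := τ.exists_sibling hΦ (tail_ne_nil_of_lt h) B
    have hprec : τ.prec B υ := .inr ⟨htop, hυ, hB⟩
    exact ⟨υ, hprec, lt_of_lt_of_prec h hprec⟩
  · obtain ⟨m, hm, -⟩ := τ.head.exists_step_not_mem hΦ hΦ.box_falsum_mem htop
    exact ⟨τ.cons m hm, .inl (τ.lt_cons m hm), lt_trans h (τ.lt_cons m hm)⟩

def Forces : Path Φ → Formula → Prop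
  | σ, .var n => Formula.var n ∈ σ.head
  | _, .falsum => False
  | σ, .neg A => ¬ σ.Forces A
  | σ, .or A B => σ.Forces A ∨ σ.Forces B
  | σ, .box A => ∀ τ, σ.lt τ → τ.Forces A
  | σ, .bb A => ∀ τ, σ.prec A τ → τ.Forces A

section TruthLemma

variable (hΦ : Adequate Φ) {A : Formula} (ih : ∀ τ : Path Φ, τ.Forces A ↔ A ∈ τ.head)
include hΦ ih

lemma forces_box_iff (hA : A.box ∈ Φ) (σ : Path Φ) :
    σ.Forces A.box ↔ A.box ∈ σ.head := by
  refine ⟨fun h => by_contra fun hσ => ?_,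
    fun h τ hτ => (ih τ).mpr ((step_of_lt hτ).mem_of_box_mem h)⟩
  obtain ⟨m, hm, hAm⟩ := σ.head.exists_step_not_mem hΦ hA hσ
  exact hAm ((ih _).mp (h _ (σ.lt_cons m hm)))

lemma forces_bb_iff (hA : A.bb ∈ Φ) (σ : Path Φ) :
    σ.Forces A.bb ↔ A.bb ∈ σ.head := by
  by_cases htop : Formula.falsum.box ∈ σ.head
  · have hprec (τ : Path Φ) : σ.prec A τ ↔ τ.tail = σ.tail ∧ (A ∈ τ.head ↔ A.bb ∈ σ.head) := by
      simp only [prec, htop, hA, true_and, forall_const]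
      exact or_iff_right fun h => box_falsum_not_mem_of_lt h htop
    simp only [Forces, hprec, ih]
    refine ⟨fun h => by_contra fun hσ => ?_, fun hσ τ ⟨_, hτ⟩ => hτ.mpr hσ⟩
    obtain ⟨τ, hτ, hAτ⟩ := σ.exists_sibling_not_mem hΦ hA hσ
    exact hAτ (h τ ⟨hτ, iff_of_false hAτ hσ⟩)
  · have hprec (τ : Path Φ) : σ.prec A τ ↔ σ.lt τ := by simp [prec, htop]
    simp only [Forces, hprec]
    rw [σ.head.bb_mem_iff_box_mem hΦ hA htop]
    exact forces_box_iff hΦ ih (hΦ.box_mem_of_bb_mem hA) σ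

end TruthLemma

theorem forces_iff_mem (hΦ : Adequate Φ) {C : Formula} (hC : C ∈ Φ) (σ : Path Φ) :
    σ.Forces C ↔ C ∈ σ.head := by
  induction C generalizing σ with
  | var n => exact Iff.rfl
  | falsum => exact iff_of_false id σ.head.falsum_not_mem
  | neg A ih =>
    have hA := hΦ.of_neg_mem hC
    rw [σ.head.neg_mem_iff hA hC, ← ih hA]
    rfl
  | or A B ihA ihB =>
    obtain ⟨hA, hB⟩ := hΦ.of_or_mem hC
    rw [σ.head.or_mem_iff hA hB hC, ← ihA hA, ← ihB hB]
    rfl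
  | box A ih => exact forces_box_iff hΦ (ih (hΦ.of_box_mem hC)) hC σ
  | bb A ih =>
    exact forces_bb_iff hΦ (ih (hΦ.of_box_mem (hΦ.box_mem_of_bb_mem hC))) hC σ

def frame (hΦ : Adequate Φ) [Nonempty (Path Φ)] : GRFrame where
  W := Path Φ
  nonempty := inferInstance
  lt := lt
  lt_trans := lt_trans
  cwf := by
    have : IsTrans (Path Φ) (fun σ τ => τ.lt σ) := ⟨fun _ _ _ h₁ h₂ => lt_trans h₂ h₁⟩
    have : Std.Irrefl (fun σ τ : Path Φ => τ.lt σ) := ⟨lt_irrefl⟩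
    exact Finite.wellFounded_of_trans_of_irrefl _
  prec := prec
  lt_to_prec := .inl
  lt_prec_lt := lt_of_lt_of_prec
  prec_lt_lt := lt_of_prec_of_lt
  lt_succ h := exists_prec_lt hΦ h _

def sat (hΦ : Adequate Φ) [Nonempty (Path Φ)] : GRSat (frame hΦ) where
  frc := Forces
  frc_falsum _ := id
  frc_neg _ _ := Iff.rfl
  frc_or _ _ _ := Iff.rfl
  frc_box _ _ := Iff.rfl
  frc_bb _ _ := Iff.rfl

end Path

def modalClosure : Formula → List Formula
  | .var n => [.var n]
  | .falsum => [.falsum]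
  | .neg A => A.neg :: modalClosure A
  | .or A B => A.or B :: (modalClosure A ++ modalClosure B)
  | .box A => A.box :: modalClosure A
  | .bb A => A.bb :: A.box :: A.neg.box :: A.neg :: modalClosure A

lemma mem_modalClosure_self (C : Formula) : C ∈ modalClosure C := by
  cases C <;> simp [modalClosure]

lemma modalClosure_subset_of_mem {C D : Formula} (h : D ∈ modalClosure C) :
    modalClosure D ⊆ modalClosure C := by
  induction C with
  | var n | falsum => simp_all [modalClosure]
  | neg A ih | box A ih =>
    rcases List.mem_cons.mp h with rfl | h
    · exact List.Subset.refl _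
    · exact List.Subset.trans (ih h) (List.subset_cons_self _ _)
  | or A B ihA ihB =>
    rcases List.mem_cons.mp h with rfl | h
    · exact List.Subset.refl _
    · intro x hx
      rcases List.mem_append.mp h with h | h
      · simp [modalClosure, ihA h hx]
      · simp [modalClosure, ihB h hx]
  | bb A ih =>
    simp only [modalClosure, List.mem_cons] at h
    intro x hx
    rcases h with rfl | rfl | rfl | rfl | h
    · exact hx
    all_goals simp only [modalClosure, List.mem_cons] at hx ⊢
    · tauto
    · tauto
    · tauto
    · exact .inr (.inr (.inr (.inr (ih h hx))))

def adequateClosure (A : Formula) : List Formula :=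
  Formula.falsum.box :: Formula.falsum :: modalClosure A

lemma mem_adequateClosure_of_mem {A C D : Formula} (hC : C ∈ adequateClosure A)
    (hD : D ∈ modalClosure C) : D ∈ adequateClosure A := by
  simp only [adequateClosure, List.mem_cons] at hC ⊢
  rcases hC with rfl | rfl | hC
  · simp only [modalClosure, List.mem_cons, List.not_mem_nil, or_false] at hD
    tauto
  · simp_all [modalClosure]
  · exact .inr (.inr (modalClosure_subset_of_mem hC hD))

lemma adequate_adequateClosure (A : Formula) : Adequate (adequateClosure A) := by
  have h {C D : Formula} := @mem_adequateClosure_of_mem A C D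
  refine ⟨List.mem_cons_self, fun hC => h hC ?_, fun hC => ⟨h hC ?_, h hC ?_⟩, fun hC => h hC ?_,
    fun hC => h hC ?_, fun hC => h hC ?_⟩ <;> simp [modalClosure, mem_modalClosure_self]

theorem complete {A : Formula} (h : ∀ F : GRFrame, Finite F.W → ValidOn F A) : GRcirc A := by
  by_contra hA
  have hΦ := adequate_adequateClosure A
  have hAΦ : A ∈ adequateClosure A := by simp [adequateClosure, mem_modalClosure_self]
  obtain ⟨r, hr⟩ := Atom.exists_of_consistent (Φ := adequateClosure A) (consistent_singleton_neg hA)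
  let σ : Path (adequateClosure A) := ⟨r, [], .singleton r⟩
  have : Nonempty (Path (adequateClosure A)) := ⟨σ⟩
  have hσ : σ.Forces A := h (Path.frame hΦ) (inferInstanceAs (Finite (Path _))) (Path.sat hΦ) σ
  exact (hr A hAΦ).2 (by simp) ((Path.forces_iff_mem hΦ hAΦ σ).mp hσ)

end GRcirc

/-- Completeness and the finite frame property of `GR°`:
`GR° ⊢ A` iff `A` is valid on all `GR°`-frames iff `A` is valid on all
finite `GR°`-frames. -/
theorem GRcirc_ffp (A : Formula) :
    (GRcirc A ↔ ∀ F : GRFrame, ValidOn F A) ∧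
    (GRcirc A ↔ ∀ F : GRFrame, Finite F.W → ValidOn F A) :=
  ⟨⟨GRcirc.sound, fun h => GRcirc.complete fun F _ => h F⟩,
    ⟨fun h F _ => GRcirc.sound h F, GRcirc.complete⟩⟩
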